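/- arXiv:0907.5079 — 2 statements merged into one kernel-verified Lean document; each statement's English description precedes it below -/
import Mathlib

section
/- Let Γ be a group acting on the right on a finite graph T and on the left on a finite graph H, and let G be a finite graph. Let Γ act on the poset Hom(T × H, G) by (γ·α)(t,h) = α(t·γ, γ^{-1}·h), and let Hom_Γ(T × H, G) be the subposet of fixed points. Then precomposition with the quotient graph homomorphism p : T × H → T ×_Γ H defines an order-preserving injection from Hom(T ×_Γ H, G) into Hom(T × H, G) whose image is exactly Hom_Γ(T × H, G), and which is an isomorphism of posets onto Hom_Γ(T × H, G). -/
/-- A graph: a vertex set with a symmetric adjacency relation (loops allowed). -/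
structure SymGraph (V : Type) where
  Adj : V → V → Prop
  symm : ∀ x y, Adj x y → Adj y x

/-- Multihomomorphisms from `G` to `H`. -/
def SymGraph.IsMultiHom {V W : Type} (G : SymGraph V) (H : SymGraph W) (α : V → Set W) : Prop :=
  (∀ v, (α v).Nonempty) ∧ ∀ v w, G.Adj v w → ∀ x ∈ α v, ∀ y ∈ α w, H.Adj x y

/-- The Hom poset `Hom(G,H)`. -/
def HomPoset {V W : Type} (G : SymGraph V) (H : SymGraph W) : Type :=
  {α : V → Set W // G.IsMultiHom H α}

instance {V W : Type} (G : SymGraph V) (H : SymGraph W) : PartialOrder (HomPoset G H) :=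
  Subtype.partialOrder _

/-- The categorical product of graphs. -/
def SymGraph.prod {V W : Type} (G : SymGraph V) (H : SymGraph W) : SymGraph (V × W) where
  Adj a b := G.Adj a.1 b.1 ∧ H.Adj a.2 b.2
  symm _ _ h := ⟨G.symm _ _ h.1, H.symm _ _ h.2⟩

section Twisted

variable {Γ VT VH VG : Type} [Group Γ]

/-- The orbit relation of the diagonal action `γ·(t,h) = (t·γ⁻¹, γ·h)` on `T × H`. -/
def twRel (actT : VT → Γ → VT) (actH : Γ → VH → VH) (a b : VT × VH) : Prop :=
  ∃ γ : Γ, b = (actT a.1 γ⁻¹, actH γ a.2)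

/-- The twisted product graph `T ×_Γ H`: the quotient graph of `T × H` by the
diagonal `Γ`-action; two orbits are adjacent iff they contain adjacent
representatives. -/
def twProd (T : SymGraph VT) (H : SymGraph VH) (actT : VT → Γ → VT) (actH : Γ → VH → VH) :
    SymGraph (Quot (twRel actT actH)) where
  Adj X Y := ∃ a b, Quot.mk _ a = X ∧ Quot.mk _ b = Y ∧ (T.prod H).Adj a b
  symm X Y h := by
    obtain ⟨a, b, ha, hb, hab⟩ := h
    exact ⟨b, a, hb, ha, (T.prod H).symm _ _ hab⟩

/-- Precomposition with the quotient graph homomorphism `p : T × H → T ×_Γ H`. -/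
def precompQuot (T : SymGraph VT) (H : SymGraph VH) (G : SymGraph VG)
    (actT : VT → Γ → VT) (actH : Γ → VH → VH)
    (α : HomPoset (twProd T H actT actH) G) : HomPoset (T.prod H) G :=
  ⟨fun a => α.1 (Quot.mk _ a),
   ⟨fun a => α.2.1 _,
    fun a b hab => α.2.2 _ _ ⟨a, b, rfl, rfl, hab⟩⟩⟩

/-- The action of `γ ∈ Γ` on `Hom(T × H, G)`, `(γ·α)(t,h) = α(t·γ, γ⁻¹·h)`. -/
def homActProd (T : SymGraph VT) (H : SymGraph VH) (G : SymGraph VG)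
    (actT : VT → Γ → VT) (actH : Γ → VH → VH)
    (hTadj : ∀ (γ : Γ) t t', T.Adj t t' → T.Adj (actT t γ) (actT t' γ))
    (hHadj : ∀ (γ : Γ) h h', H.Adj h h' → H.Adj (actH γ h) (actH γ h'))
    (γ : Γ) (α : HomPoset (T.prod H) G) : HomPoset (T.prod H) G :=
  ⟨fun a => α.1 (actT a.1 γ, actH γ⁻¹ a.2),
   ⟨fun a => α.2.1 _,
    fun a b hab => α.2.2 _ _ ⟨hTadj γ _ _ hab.1, hHadj γ⁻¹ _ _ hab.2⟩⟩⟩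

end Twisted

/-! Precomposition with the quotient map `p : T × H → T ×_Γ H` is an order embedding
because `p` is surjective on vertices and every edge of `T ×_Γ H` is the image of an edge
of `T × H`. A multihomomorphism of `T × H` is `Γ`-fixed exactly when it is constant on
the orbits of the diagonal action, i.e. when it factors through `p`; the factored map is
again a multihomomorphism since adjacency in `T ×_Γ H` is witnessed by representatives. -/

namespace HomPoset

variable {Γ VT VH VG : Type} [Group Γ]
  (T : SymGraph VT) (H : SymGraph VH) (G : SymGraph VG)
  (actT : VT → Γ → VT) (actH : Γ → VH → VH)

theorem precompQuot_le_precompQuot_iff {α β : HomPoset (twProd T H actT actH) G} :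
    precompQuot T H G actT actH α ≤ precompQuot T H G actT actH β ↔ α ≤ β :=
  ⟨fun h => Quot.ind (β := fun X => α.1 X ⊆ β.1 X) h, fun h a => h (Quot.mk _ a)⟩

def precompQuotEmbedding : HomPoset (twProd T H actT actH) G ↪o HomPoset (T.prod H) G :=
  OrderEmbedding.ofMapLEIff (precompQuot T H G actT actH)
    fun _ _ => precompQuot_le_precompQuot_iff T H G actT actH

variable {T H G actT actH}
  (hTadj : ∀ (γ : Γ) t t', T.Adj t t' → T.Adj (actT t γ) (actT t' γ))
  (hHadj : ∀ (γ : Γ) h h', H.Adj h h' → H.Adj (actH γ h) (actH γ h'))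

theorem homActProd_precompQuot (γ : Γ) (α : HomPoset (twProd T H actT actH) G) :
    homActProd T H G actT actH hTadj hHadj γ (precompQuot T H G actT actH α) =
      precompQuot T H G actT actH α := by
  refine Subtype.ext (funext fun a => congrArg α.1 (Quot.sound ⟨γ⁻¹, ?_⟩).symm)
  simp

theorem apply_eq_of_twRel {α : HomPoset (T.prod H) G}
    (hα : ∀ γ : Γ, homActProd T H G actT actH hTadj hHadj γ α = α) {a b : VT × VH}
    (hab : twRel actT actH a b) : α.1 a = α.1 b := by
  obtain ⟨γ, rfl⟩ := hab
  have := congrFun (congrArg Subtype.val (hα γ⁻¹)) a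
  simpa [homActProd] using this.symm

def descend (α : HomPoset (T.prod H) G)
    (hα : ∀ γ : Γ, homActProd T H G actT actH hTadj hHadj γ α = α) :
    HomPoset (twProd T H actT actH) G :=
  ⟨Quot.lift α.1 fun _ _ => apply_eq_of_twRel hTadj hHadj hα,
   Quot.ind (β := fun X => (Quot.lift α.1 _ X).Nonempty) α.2.1,
   by
    rintro _ _ ⟨a, b, rfl, rfl, hab⟩
    exact α.2.2 a b hab⟩

theorem precompQuot_descend (α : HomPoset (T.prod H) G)
    (hα : ∀ γ : Γ, homActProd T H G actT actH hTadj hHadj γ α = α) :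
    precompQuot T H G actT actH (descend hTadj hHadj α hα) = α :=
  Subtype.ext rfl

theorem range_precompQuot :
    Set.range (precompQuot T H G actT actH) =
      {α | ∀ γ : Γ, homActProd T H G actT actH hTadj hHadj γ α = α} := by
  ext α
  constructor
  · rintro ⟨β, rfl⟩ γ
    exact homActProd_precompQuot hTadj hHadj γ β
  · exact fun hα => ⟨descend hTadj hHadj α hα, precompQuot_descend hTadj hHadj α hα⟩

end HomPoset

open HomPoset in
theorem stmt_2_general {Γ VT VH VG : Type} [Group Γ]
    (T : SymGraph VT) (H : SymGraph VH) (G : SymGraph VG)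
    (actT : VT → Γ → VT)
    (hTadj : ∀ (γ : Γ) t t', T.Adj t t' → T.Adj (actT t γ) (actT t' γ))
    (actH : Γ → VH → VH)
    (hHadj : ∀ (γ : Γ) h h', H.Adj h h' → H.Adj (actH γ h) (actH γ h')) :
    Monotone (precompQuot T H G actT actH) ∧
    Function.Injective (precompQuot T H G actT actH) ∧
    Set.range (precompQuot T H G actT actH) =
      {α : HomPoset (T.prod H) G | ∀ γ : Γ, homActProd T H G actT actH hTadj hHadj γ α = α} ∧
    (∀ α β : HomPoset (twProd T H actT actH) G,
      precompQuot T H G actT actH α ≤ precompQuot T H G actT actH β ↔ α ≤ β) :=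
  ⟨(precompQuotEmbedding T H G actT actH).monotone,
   (precompQuotEmbedding T H G actT actH).injective,
   range_precompQuot hTadj hHadj,
   fun _ _ => precompQuot_le_precompQuot_iff T H G actT actH⟩

/-- precomposition with the quotient homomorphism `p : T × H → T ×_Γ H`
is an order-preserving injection of `Hom(T ×_Γ H, G)` into `Hom(T × H, G)` whose
image is exactly the fixed-point subposet `Hom_Γ(T × H, G)`, and which is an order
isomorphism onto that subposet. -/
theorem stmt_2 {Γ VT VH VG : Type} [Group Γ] [Fintype VT] [Fintype VH] [Fintype VG]
    (T : SymGraph VT) (H : SymGraph VH) (G : SymGraph VG)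
    (actT : VT → Γ → VT)
    (hT1 : ∀ t, actT t 1 = t)
    (hTmul : ∀ t (γ δ : Γ), actT t (γ * δ) = actT (actT t γ) δ)
    (hTadj : ∀ (γ : Γ) t t', T.Adj t t' → T.Adj (actT t γ) (actT t' γ))
    (actH : Γ → VH → VH)
    (hH1 : ∀ h, actH 1 h = h)
    (hHmul : ∀ (γ δ : Γ) h, actH (γ * δ) h = actH γ (actH δ h))
    (hHadj : ∀ (γ : Γ) h h', H.Adj h h' → H.Adj (actH γ h) (actH γ h')) :
    Monotone (precompQuot T H G actT actH) ∧
    Function.Injective (precompQuot T H G actT actH) ∧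
    Set.range (precompQuot T H G actT actH) =
      {α : HomPoset (T.prod H) G | ∀ γ : Γ, homActProd T H G actT actH hTadj hHadj γ α = α} ∧
    (∀ α β : HomPoset (twProd T H actT actH) G,
      precompQuot T H G actT actH α ≤ precompQuot T H G actT actH β ↔ α ≤ β) :=
  stmt_2_general T H G actT hTadj actH hHadj
end

section
/- Let P be a finite poset with a free action of a finite group Γ by order automorphisms, and let k ≥ 0. Then the induced Γ-action on the reflexive graph (Chain^k(P))^1 is 2^k-discontinuous: for every vertex c of (Chain^k(P))^1 and every nonidentity γ ∈ Γ, every walk in (Chain^k(P))^1 from c to γ·c has length at least 2^k. -/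
/-- A graph: a vertex set with a symmetric adjacency relation (loops allowed). -/
structure RGraph (V : Type) where
  Adj : V → V → Prop
  symm : ∀ x y, Adj x y → Adj y x

/-- A walk of length `l` from `v` to `w`. -/
def RGraph.HasWalk {V : Type} (G : RGraph V) (l : ℕ) (v w : V) : Prop :=
  ∃ f : ℕ → V, f 0 = v ∧ f l = w ∧ ∀ i < l, G.Adj (f i) (f (i + 1))

/-- The atoms (minimal elements) of a poset. -/
def MinVert (P : Type) [PartialOrder P] : Type := {x : P // ∀ y, y ≤ x → y = x}

/-- The reflexive graph `P^1` on the atoms of `P`. -/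
def oneSkel (P : Type) [PartialOrder P] : RGraph (MinVert P) where
  Adj a b := ∃ z, a.1 ≤ z ∧ b.1 ≤ z
  symm a b h := by obtain ⟨z, h1, h2⟩ := h; exact ⟨z, h2, h1⟩

/-- The poset `Chain(P)` of nonempty finite chains of `P`, ordered by inclusion. -/
def ChainPoset (P : Type) [PartialOrder P] : Type :=
  {c : Set P // c.Nonempty ∧ c.Finite ∧ IsChain (· ≤ ·) c}

instance chainPosetPO (P : Type) [PartialOrder P] : PartialOrder (ChainPoset P) :=
  Subtype.partialOrder _

/-- The map `Chain(P) → Chain(Q)` induced by a monotone map, by taking images. -/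
def chainMap {P Q : Type} [PartialOrder P] [PartialOrder Q] (f : P → Q) (hf : Monotone f)
    (c : ChainPoset P) : ChainPoset Q :=
  ⟨f '' c.1, c.2.1.image f, c.2.2.1.image f,
   c.2.2.2.image_of_map_rel _ _ f (fun _ _ h => hf h)⟩

theorem chainMap_mono {P Q : Type} [PartialOrder P] [PartialOrder Q] (f : P → Q)
    (hf : Monotone f) : Monotone (chainMap f hf) :=
  fun _ _ h => Set.image_mono (f := f) h

theorem chainMap_cancel {P : Type} [PartialOrder P] (f g : P → P)
    (hf : Monotone f) (hg : Monotone g) (hfg : ∀ x, f (g x) = x) (c : ChainPoset P) :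
    chainMap f hf (chainMap g hg c) = c := by
  apply Subtype.ext
  show f '' (g '' c.1) = c.1
  rw [Set.image_image]
  have h : (fun x => f (g x)) = fun x => x := funext hfg
  rw [h, Set.image_id']

/-- The iterated chain poset `Chain^k(P)`, together with its partial order. -/
def IterChainAux (P : Type) (po : PartialOrder P) : ℕ → (T : Type) × PartialOrder T
  | 0 => ⟨P, po⟩
  | k + 1 => ⟨@ChainPoset (IterChainAux P po k).1 (IterChainAux P po k).2,
      @chainPosetPO (IterChainAux P po k).1 (IterChainAux P po k).2⟩

/-- `Chain^k(P)`. -/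
abbrev IterChain (P : Type) [po : PartialOrder P] (k : ℕ) : Type :=
  (IterChainAux P po k).1

instance (P : Type) [po : PartialOrder P] (k : ℕ) : PartialOrder (IterChain P k) :=
  (IterChainAux P po k).2

/-- The monotone map `Chain^k(P) → Chain^k(P)` induced by a monotone map `P → P`. -/
def iterMapAux (P : Type) (po : PartialOrder P) (f : P → P)
    (hf : @Monotone P P po.toPreorder po.toPreorder f) :
    ∀ k : ℕ, {g : IterChain P k → IterChain P k // Monotone g}
  | 0 => ⟨f, hf⟩
  | k + 1 => ⟨chainMap (iterMapAux P po f hf k).1 (iterMapAux P po f hf k).2,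
      chainMap_mono _ _⟩

theorem iterMapAux_cancel (P : Type) (po : PartialOrder P) (f g : P → P)
    (hf : @Monotone P P po.toPreorder po.toPreorder f) (hg : @Monotone P P po.toPreorder po.toPreorder g)
    (hfg : ∀ x, f (g x) = x) :
    ∀ (k : ℕ) (c : IterChain P k),
      (iterMapAux P po f hf k).1 ((iterMapAux P po g hg k).1 c) = c
  | 0, c => hfg c
  | k + 1, c => chainMap_cancel (iterMapAux P po f hf k).1 (iterMapAux P po g hg k).1
      (iterMapAux P po f hf k).2 (iterMapAux P po g hg k).2
      (iterMapAux_cancel P po f g hf hg hfg k) c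

/-- The map induced on atoms by a monotone map with a two-sided monotone inverse. -/
def minMap {Q : Type} [PartialOrder Q] (f g : Q → Q) (hg : Monotone g)
    (hfg : ∀ x, f (g x) = x) (hgf : ∀ x, g (f x) = x) (x : MinVert Q) : MinVert Q :=
  ⟨f x.1, fun q hq => by
    have h1 : g q ≤ x.1 := by have := hg hq; rwa [hgf] at this
    have h2 := x.2 _ h1
    have h3 : f (g q) = f x.1 := by rw [h2]
    rwa [hfg] at h3⟩

/-- The action of `γ ∈ Γ` on the atoms of `Chain^k(P)` induced by a `Γ`-action on
`P` by order automorphisms. -/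
def iterMinAct {Γ P : Type} [Group Γ] [po : PartialOrder P] [MulAction Γ P]
    (hmono : ∀ γ : Γ, Monotone (fun p : P => γ • p)) (γ : Γ) (k : ℕ) :
    MinVert (IterChain P k) → MinVert (IterChain P k) :=
  minMap (iterMapAux P po (fun p => γ • p) (hmono γ) k).1
    (iterMapAux P po (fun p => γ⁻¹ • p) (hmono γ⁻¹) k).1
    (iterMapAux P po (fun p => γ⁻¹ • p) (hmono γ⁻¹) k).2
    (iterMapAux_cancel P po _ _ (hmono γ) (hmono γ⁻¹) (fun x => smul_inv_smul γ x) k)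
    (iterMapAux_cancel P po _ _ (hmono γ⁻¹) (hmono γ) (fun x => inv_smul_smul γ x) k)

/-!
Atoms of `Chain(Q)` are singletons, so a walk of length `l` from `{x}` to `{γ x}` in
`Chain(Q)^1` is a sequence `x = q₀, …, q_l = γ x` with consecutive terms comparable; extend it
`γ`-periodically. For `γ ≠ 1`, `γ` moves every element of `Chain^k(P)` to an incomparable one
(an order automorphism of a finite poset fixes what it moves up or down, and a chain fixed
setwise is fixed pointwise). Hence the periodic sequence has a valley `q_{i-1} ≥ q_i ≤ q_{i+1}`.
An atom `u ≤ q_i` lies below `q_{i+1}` and `γ u` below `q_{i+l-1}`, and the atoms below the ends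
of a comparability sequence of length `n` are joined by a walk of length `⌊n/2⌋ + 1`. So `u` and
`γ u` are joined by a walk of length `⌊l/2⌋` in `(Chain^k P)^1`, and induction on `k` applies.
-/

open Function Relation Set

namespace RGraph

variable {V : Type} {G : RGraph V}

theorem hasWalk_zero (v : V) : G.HasWalk 0 v v := ⟨fun _ => v, rfl, rfl, by simp⟩

theorem HasWalk.snoc {l : ℕ} {u v x : V} (h : G.HasWalk l u v) (hvx : G.Adj v x) :
    G.HasWalk (l + 1) u x := by
  obtain ⟨f, hf0, hfl, hf⟩ := h
  refine ⟨update f (l + 1) x, by simp [hf0], by simp, fun i hi => ?_⟩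
  rcases (Nat.lt_succ_iff.mp hi).lt_or_eq with hi | rfl
  · simpa [update_of_ne (by omega : i ≠ l + 1), update_of_ne (by omega : i + 1 ≠ l + 1)]
      using hf i hi
  · simpa [update_of_ne (by omega : i ≠ i + 1), hfl] using hvx

theorem hasWalk_one {u v : V} (h : G.Adj u v) : G.HasWalk 1 u v := (hasWalk_zero u).snoc h

end RGraph

theorem Monotone.symmGen_map {Q R : Type} [Preorder Q] [Preorder R] {f : Q → R}
    (hf : Monotone f) {x y : Q} (h : SymmGen (· ≤ ·) x y) : SymmGen (· ≤ ·) (f x) (f y) :=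
  h.imp (fun h => hf h) (fun h => hf h)

/-- Some iterate of `f` fixes `x`, and the orbit of `x` is monotone. -/
theorem Monotone.apply_eq_self_of_symmGen {Q : Type} [PartialOrder Q] [Finite Q] {f : Q → Q}
    (hf : Monotone f) (hinj : Injective f) {x : Q} (h : SymmGen (· ≤ ·) x (f x)) : f x = x := by
  obtain ⟨n, hn, hper⟩ := mem_periodicPts.mp (hinj.mem_periodicPts x)
  have hn : 1 ≤ n := hn
  rcases h with h | h
  · have := hf.monotone_iterate_of_le_map h hn
    simp only [iterate_one, hper.eq] at this
    exact le_antisymm this h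
  · have := hf.antitone_iterate_of_map_le h hn
    simp only [iterate_one, hper.eq] at this
    exact le_antisymm h this

section OneSkeleton

variable {Q : Type} [PartialOrder Q]

theorem exists_minVert_le [WellFoundedLT Q] (x : Q) : ∃ u : MinVert Q, u.1 ≤ x := by
  obtain ⟨u, hux, hu⟩ := exists_minimal_le_of_wellFoundedLT (fun _ => True) x trivial
  exact ⟨⟨u, fun y hy => hu.eq_of_le trivial hy⟩, hux⟩

theorem oneSkel_adj_of_symmGen {u v : MinVert Q} {x y : Q} (hu : u.1 ≤ x) (hv : v.1 ≤ y)
    (hxy : SymmGen (· ≤ ·) x y) : (oneSkel Q).Adj u v := by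
  rcases hxy with h | h
  · exact ⟨y, hu.trans h, hv⟩
  · exact ⟨x, hu, hv.trans h⟩

/-- An atom below both `q n` and `q (n + 1)` is adjacent to every atom below `q (n + 2)`. -/
theorem oneSkel_hasWalk_of_symmGen [WellFoundedLT Q] (q : ℕ → Q) :
    ∀ n, (∀ i < n, SymmGen (· ≤ ·) (q i) (q (i + 1))) →
      ∀ u v : MinVert Q, u.1 ≤ q 0 → v.1 ≤ q n → (oneSkel Q).HasWalk (n / 2 + 1) u v
  | 0, _, _, _, hu, hv => RGraph.hasWalk_one (oneSkel_adj_of_symmGen hu hv .rfl)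
  | 1, hq, _, _, hu, hv => RGraph.hasWalk_one (oneSkel_adj_of_symmGen hu hv (hq 0 one_pos))
  | n + 2, hq, u, v, hu, hv => by
    obtain ⟨c, hcn, hcn'⟩ : ∃ c : MinVert Q, c.1 ≤ q n ∧ c.1 ≤ q (n + 1) := by
      rcases hq n (by omega) with h | h
      · obtain ⟨c, hc⟩ := exists_minVert_le (q n)
        exact ⟨c, hc, hc.trans h⟩
      · obtain ⟨c, hc⟩ := exists_minVert_le (q (n + 1))
        exact ⟨c, hc.trans h, hc⟩
    have hwalk := oneSkel_hasWalk_of_symmGen q n (fun i hi => hq i (by omega)) u c hu hcn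
    rw [show (n + 2) / 2 + 1 = n / 2 + 1 + 1 by omega]
    exact hwalk.snoc (oneSkel_adj_of_symmGen hcn' hv (hq (n + 1) (by omega)))

/-- Without a valley the sequence descends from its first descent on, or ascends throughout;
either way some `p j` is comparable to `p (j + l) = f (p j)`. -/
theorem exists_valley_of_periodic {f : Q → Q} {l : ℕ} (p : ℕ → Q)
    (hp : ∀ i, SymmGen (· ≤ ·) (p i) (p (i + 1))) (hper : ∀ i, p (i + l) = f (p i))
    (hf : ∀ x, ¬ SymmGen (· ≤ ·) x (f x)) : ∃ i, p (i + 1) ≤ p i ∧ p (i + 1) ≤ p (i + 2) := by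
  by_contra! hvalley
  by_cases hdown : ∃ j, p (j + 1) ≤ p j
  · obtain ⟨j, hj⟩ := hdown
    have hdesc : ∀ n, j ≤ n → p (n + 1) ≤ p n := by
      intro n hn
      induction n, hn using Nat.le_induction with
      | base => exact hj
      | succ n _ ih => exact (hp (n + 1)).resolve_left (hvalley n ih)
    have := Nat.rel_of_forall_rel_succ_of_le_of_le (· ≥ ·) hdesc le_rfl (j.le_add_right l)
    exact hf (p j) (.of_rel_symm (hper j ▸ this))
  · push Not at hdown
    have hasc : Monotone p := monotone_nat_of_le_succ fun n => (hp n).resolve_right (hdown n)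
    exact hf (p 0) (.of_rel ((hasc (Nat.zero_le l)).trans_eq (by simpa using hper 0)))

theorem exists_periodic_extension {f : Q → Q} (hf : Monotone f) {l : ℕ} (hl : 0 < l)
    (q : ℕ → Q) (hq : ∀ i < l, SymmGen (· ≤ ·) (q i) (q (i + 1))) (hql : q l = f (q 0)) :
    ∃ p : ℕ → Q, (∀ i, SymmGen (· ≤ ·) (p i) (p (i + 1))) ∧ ∀ i, p (i + l) = f (p i) := by
  set p : ℕ → Q := fun i => f^[i / l] (q (i % l))
  have hp : ∀ b, ∀ a ≤ l, p (l * b + a) = f^[b] (q a) := by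
    intro b a ha
    rcases ha.lt_or_eq with ha | rfl
    · simp [p, Nat.mul_add_div hl, Nat.div_eq_of_lt ha, Nat.mod_eq_of_lt ha]
    · simp only [p, ← mul_add_one, Nat.mul_div_cancel_left _ hl, Nat.mul_mod_right, hql]
      exact iterate_succ_apply f b (q 0)
  refine ⟨p, fun i => ?_, fun i => ?_⟩
  · rw [← Nat.div_add_mod i l, add_assoc, hp _ _ (Nat.mod_lt i hl).le, hp _ _ (Nat.mod_lt i hl)]
    exact (hf.iterate _).symmGen_map (hq _ (Nat.mod_lt i hl))
  · simp [p, Nat.add_div_right _ hl, iterate_succ_apply']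

/-- Start at an atom below a valley: it lies below three consecutive terms. -/
theorem exists_oneSkel_hasWalk_half [WellFoundedLT Q] {f : Q → Q} (hf : Monotone f)
    (hfree : ∀ x, ¬ SymmGen (· ≤ ·) x (f x)) {l : ℕ} (p : ℕ → Q)
    (hp : ∀ i, SymmGen (· ≤ ·) (p i) (p (i + 1))) (hper : ∀ i, p (i + l) = f (p i)) :
    ∃ u : MinVert Q, ∀ v : MinVert Q, v.1 ≤ f u.1 → (oneSkel Q).HasWalk (l / 2) u v := by
  have hl : 2 ≤ l := by
    by_contra! hl
    interval_cases l
    · exact hfree (p 0) (hper 0 ▸ .rfl)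
    · exact hfree (p 0) (hper 0 ▸ hp 0)
  obtain ⟨i, hi, hi'⟩ := exists_valley_of_periodic p hp hper hfree
  obtain ⟨u, hu⟩ := exists_minVert_le (p (i + 1))
  refine ⟨u, fun v hv => ?_⟩
  have hvp : v.1 ≤ p (i + 2 + (l - 2)) :=
    calc v.1 ≤ f u.1 := hv
      _ ≤ f (p i) := hf (hu.trans hi)
      _ = p (i + 2 + (l - 2)) := by rw [← hper, show i + 2 + (l - 2) = i + l by omega]
  have hwalk := oneSkel_hasWalk_of_symmGen (fun j => p (i + 2 + j)) (l - 2)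
    (fun j _ => hp _) u v (hu.trans hi') hvp
  rwa [show (l - 2) / 2 + 1 = l / 2 by omega] at hwalk

theorem minVert_chainPoset_eq_singleton (c : MinVert (ChainPoset Q)) {x : Q} (hx : x ∈ c.1.1) :
    c.1.1 = {x} := by
  have := c.2 ⟨{x}, singleton_nonempty x, finite_singleton x, subsingleton_singleton.isChain⟩
    (singleton_subset_iff.mpr hx)
  exact (congrArg Subtype.val this).symm

theorem exists_symmGen_of_oneSkel_chainPoset_hasWalk {F : Q → Q} {l : ℕ}
    {c d : MinVert (ChainPoset Q)} (hw : (oneSkel (ChainPoset Q)).HasWalk l c d)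
    (hd : d.1.1 = F '' c.1.1) :
    ∃ q : ℕ → Q, (∀ i < l, SymmGen (· ≤ ·) (q i) (q (i + 1))) ∧ q l = F (q 0) := by
  obtain ⟨w, rfl, rfl, hw⟩ := hw
  set q : ℕ → Q := fun i => (w i).1.2.1.some
  have hq : ∀ i, (w i).1.1 = {q i} := fun i =>
    minVert_chainPoset_eq_singleton (w i) (w i).1.2.1.some_mem
  refine ⟨q, fun i hi => ?_, ?_⟩
  · obtain ⟨z, hiz, hiz'⟩ := hw i hi
    have hqi : q i ∈ z.1 := hiz (hq i ▸ mem_singleton _)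
    have hqi' : q (i + 1) ∈ z.1 := hiz' (hq (i + 1) ▸ mem_singleton _)
    exact z.2.2.2.total hqi hqi'
  · rwa [hq, hq, image_singleton, singleton_eq_singleton_iff] at hd

end OneSkeleton

instance finite_iterChain (P : Type) [PartialOrder P] [Finite P] : ∀ k, Finite (IterChain P k)
  | 0 => ‹Finite P›
  | k + 1 => by
    have := finite_iterChain P k
    exact Subtype.finite

section IteratedAction

variable {Γ P : Type} [Group Γ] [po : PartialOrder P] [MulAction Γ P]
  (hmono : ∀ γ : Γ, Monotone (fun p : P => γ • p))

def iterChainSMul (γ : Γ) (k : ℕ) : IterChain P k → IterChain P k :=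
  (iterMapAux P po (fun p => γ • p) (hmono γ) k).1

theorem iterChainSMul_monotone (γ : Γ) (k : ℕ) : Monotone (iterChainSMul hmono γ k) :=
  (iterMapAux P po _ (hmono γ) k).2

theorem iterChainSMul_injective (γ : Γ) (k : ℕ) : Injective (iterChainSMul hmono γ k) :=
  LeftInverse.injective (g := iterChainSMul hmono γ⁻¹ k)
    (iterMapAux_cancel P po _ _ (hmono γ⁻¹) (hmono γ) (inv_smul_smul γ) k)

variable [Finite P]

theorem eq_one_of_iterChainSMul_eq_self (hfree : ∀ (γ : Γ) (p : P), γ • p = p → γ = 1) {γ : Γ} :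
    ∀ {k : ℕ} {x : IterChain P k}, iterChainSMul hmono γ k x = x → γ = 1
  | 0, x, h => hfree γ x h
  | k + 1, x, h => by
    obtain ⟨m, hm⟩ := x.2.1
    have himage : iterChainSMul hmono γ k '' x.1 = x.1 := congrArg Subtype.val h
    have hcomp : SymmGen (· ≤ ·) m (iterChainSMul hmono γ k m) :=
      x.2.2.2.total hm (himage ▸ mem_image_of_mem _ hm)
    exact eq_one_of_iterChainSMul_eq_self hfree
      ((iterChainSMul_monotone hmono γ k).apply_eq_self_of_symmGen
        (iterChainSMul_injective hmono γ k) hcomp)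

theorem not_symmGen_iterChainSMul (hfree : ∀ (γ : Γ) (p : P), γ • p = p → γ = 1) {γ : Γ}
    (hγ : γ ≠ 1) (k : ℕ) (x : IterChain P k) :
    ¬ SymmGen (· ≤ ·) x (iterChainSMul hmono γ k x) := fun h =>
  hγ (eq_one_of_iterChainSMul_eq_self hmono hfree
    ((iterChainSMul_monotone hmono γ k).apply_eq_self_of_symmGen
      (iterChainSMul_injective hmono γ k) h))

theorem two_pow_le_of_oneSkel_hasWalk (hfree : ∀ (γ : Γ) (p : P), γ • p = p → γ = 1)
    {γ : Γ} (hγ : γ ≠ 1) :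
    ∀ (k : ℕ) (c : MinVert (IterChain P k)) {l : ℕ},
      (oneSkel (IterChain P k)).HasWalk l c (iterMinAct hmono γ k c) → 2 ^ k ≤ l
  | 0, c, l, ⟨w, hw0, hwl, _⟩ => by
    refine Nat.one_le_iff_ne_zero.mpr fun hl => ?_
    subst hl
    exact not_symmGen_iterChainSMul hmono hfree hγ 0 c.1
      (.of_rel (congrArg Subtype.val (hw0.symm.trans hwl)).le)
  | k + 1, c, l, hw => by
    have hnc := not_symmGen_iterChainSMul hmono hfree hγ k
    obtain ⟨q, hq, hql⟩ := exists_symmGen_of_oneSkel_chainPoset_hasWalk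
      (F := iterChainSMul hmono γ k) hw rfl
    have hl : 0 < l := Nat.pos_of_ne_zero fun hl => hnc (q 0) (.of_rel (hl ▸ hql).le)
    obtain ⟨p, hp, hper⟩ :=
      exists_periodic_extension (iterChainSMul_monotone hmono γ k) hl q hq hql
    obtain ⟨u, hu⟩ :=
      exists_oneSkel_hasWalk_half (iterChainSMul_monotone hmono γ k) hnc p hp hper
    have := two_pow_le_of_oneSkel_hasWalk hfree hγ k u (hu (iterMinAct hmono γ k u) le_rfl)
    rw [pow_succ]
    omega

end IteratedAction

theorem stmt_12_general {Γ P : Type} [Group Γ] [PartialOrder P] [Fintype P]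
    [MulAction Γ P]
    (hmono : ∀ γ : Γ, Monotone (fun p : P => γ • p))
    (hfree : ∀ (γ : Γ) (p : P), γ • p = p → γ = 1) (k : ℕ) :
    ∀ (c : MinVert (IterChain P k)) (γ : Γ), γ ≠ 1 →
      ∀ (l : ℕ) (w : ℕ → MinVert (IterChain P k)),
        w 0 = c → w l = iterMinAct hmono γ k c →
        (∀ i < l, (oneSkel (IterChain P k)).Adj (w i) (w (i + 1))) →
        2 ^ k ≤ l :=
  fun c _ hγ _ w h0 hl hadj =>
    two_pow_le_of_oneSkel_hasWalk hmono hfree hγ k c ⟨w, h0, hl, hadj⟩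

/-- if a finite group `Γ` acts freely on a finite poset `P` by order
automorphisms, the induced action on `(Chain^k(P))^1` is `2^k`-discontinuous: every
walk from a vertex `c` to `γ·c` with `γ ≠ 1` has length at least `2^k`. -/
theorem stmt_12 {Γ P : Type} [Group Γ] [Fintype Γ] [PartialOrder P] [Fintype P]
    [MulAction Γ P]
    (hmono : ∀ γ : Γ, Monotone (fun p : P => γ • p))
    (hfree : ∀ (γ : Γ) (p : P), γ • p = p → γ = 1) (k : ℕ) :
    ∀ (c : MinVert (IterChain P k)) (γ : Γ), γ ≠ 1 →
      ∀ (l : ℕ) (w : ℕ → MinVert (IterChain P k)),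
        w 0 = c → w l = iterMinAct hmono γ k c →
        (∀ i < l, (oneSkel (IterChain P k)).Adj (w i) (w (i + 1))) →
        2 ^ k ≤ l :=
  stmt_12_general hmono hfree k
end
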